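/- A crossed inverse property Osborn loop is a commutative Moufang loop. -/

import Mathlib

/-- A loop: binary operation with two-sided identity and unique divisions. -/
class Loop (Q : Type*) extends Mul Q, One Q where
  ld : Q → Q → Q   -- left division: `ld x y = x \ y`
  rd : Q → Q → Q   -- right division: `rd x y = x / y`
  one_mul : ∀ x : Q, 1 * x = x
  mul_one : ∀ x : Q, x * 1 = x
  mul_ld : ∀ x y : Q, x * ld x y = y
  ld_mul : ∀ x y : Q, ld x (x * y) = y
  rd_mul : ∀ x y : Q, rd x y * y = x
  mul_rd : ∀ x y : Q, rd (x * y) y = x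

namespace Loop
variable {Q : Type*} [Loop Q]
/-- left inverse `x^λ = 1 / x` -/
def linv (x : Q) : Q := rd 1 x
/-- right inverse `x^ρ = x \ 1` -/
def rinv (x : Q) : Q := ld x 1
/-- left nucleus -/
def Nl (Q : Type*) [Loop Q] : Set Q := {a | ∀ x y : Q, a * (x * y) = (a * x) * y}
/-- middle nucleus -/
def Nm (Q : Type*) [Loop Q] : Set Q := {a | ∀ x y : Q, x * (a * y) = (x * a) * y}
/-- right nucleus -/
def Nr (Q : Type*) [Loop Q] : Set Q := {a | ∀ x y : Q, (x * y) * a = x * (y * a)}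
/-- the nucleus -/
def N (Q : Type*) [Loop Q] : Set Q := Nl Q ∩ Nm Q ∩ Nr Q
/-- `S` is a subloop -/
def IsSubloop (S : Set Q) : Prop :=
  (1 : Q) ∈ S ∧ ∀ a ∈ S, ∀ b ∈ S, a * b ∈ S ∧ ld a b ∈ S ∧ rd a b ∈ S
/-- normality of a subloop via the standard equational characterization -/
def IsNormal (S : Set Q) : Prop :=
  IsSubloop S ∧ ∀ x y : Q,
    (x * ·) '' S = (· * x) '' S ∧
    (· * y) '' ((x * ·) '' S) = (x * ·) '' ((· * y) '' S) ∧
    (x * ·) '' ((y * ·) '' S) = ((x * y) * ·) '' S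
end Loop

/-! In a CIP loop `x \ y = y x^ρ` and `(x^λ)^ρ = x`, so `x^λ \ y = yx` and the Osborn law becomes
`yx · zx = x(yz · x)`. Specialising `y` resp. `z` to `x^λ` and cancelling `x` on both sides shows that
every left inverse `x^λ` is central; since `(x^ρ)^λ = x`, every element is, so `Q` is commutative, and
then `yx = xy` turns the law into the Moufang identity. -/

namespace Loop

variable {Q : Type*} [Loop Q]

theorem mul_left_cancel {x y z : Q} (h : x * y = x * z) : y = z := by
  rw [← ld_mul x y, h, ld_mul]

theorem mul_right_cancel {x y z : Q} (h : y * x = z * x) : y = z := by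
  rw [← mul_rd y x, h, mul_rd]

theorem linv_mul (x : Q) : linv x * x = 1 :=
  rd_mul 1 x

theorem mul_rinv (x : Q) : x * rinv x = 1 :=
  mul_ld x 1

theorem linv_rinv (x : Q) : linv (rinv x) = x :=
  Loop.mul_right_cancel (by rw [linv_mul, mul_rinv])

section CrossedInverse

variable (hcip : ∀ x y : Q, (x * y) * rinv x = y)
include hcip

theorem rinv_linv_of_cip (x : Q) : rinv (linv x) = x := by
  simpa only [linv_mul, Loop.one_mul] using hcip (linv x) x

theorem ld_eq_mul_rinv_of_cip (x y : Q) : ld x y = y * rinv x := by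
  simpa only [mul_ld] using (hcip x (ld x y)).symm

theorem ld_linv_of_cip (x y : Q) : ld (linv x) y = y * x := by
  rw [ld_eq_mul_rinv_of_cip hcip, rinv_linv_of_cip hcip]

end CrossedInverse

theorem mul_comm_of_mul_mul_mul (h : ∀ x y z : Q, (y * x) * (z * x) = x * ((y * z) * x))
    (x y : Q) : x * y = y * x := by
  have linv_comm : ∀ a b : Q, linv a * b = b * linv a := fun a b =>
    Loop.mul_right_cancel (x := a) <| Loop.mul_left_cancel (x := a) <| by
      rw [← h a, ← h a, linv_mul, Loop.one_mul, Loop.mul_one]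
  simpa only [linv_rinv] using linv_comm (rinv x) y

end Loop

open Loop in
theorem stmt18 {Q : Type*} [Loop Q]
    (hosb : ∀ x y z : Q, ld (linv x) y * (z * x) = x * ((y * z) * x))
    (hcip : ∀ x y : Q, (x * y) * rinv x = y) :
    (∀ x y : Q, x * y = y * x) ∧
      (∀ x y z : Q, (x * y) * (z * x) = x * ((y * z) * x)) := by
  have hosb_cip : ∀ x y z : Q, (y * x) * (z * x) = x * ((y * z) * x) := fun x y z => by
    simpa only [ld_linv_of_cip hcip] using hosb x y z
  have hcomm := mul_comm_of_mul_mul_mul hosb_cip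
  exact ⟨hcomm, fun x y z => by rw [hcomm x y]; exact hosb_cip x y z⟩
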